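/- arXiv:cs/0702051 — 6 statements merged into one kernel-verified Lean document; each statement's English description precedes it below -/
import Mathlib

section
/- Let 0 < h < 1 and P₁, P₂ > 0 be fixed. The function (α₁,α₂) ↦ α₁·g((1−h)P₁/(α₁+hP₁)) + α₂·g((1−h)P₂/(α₂+hP₂)) over the simplex {α₁,α₂ ≥ 0, α₁+α₂ = 1} attains its maximum at αₖ = Pₖ/(P₁+P₂), with maximum value g((1−h)(P₁+P₂)/(1+h(P₁+P₂))). -/
/-- Define `g x = (1/2) * log₂ (1+x)`. -/
noncomputable def g (x : ℝ) : ℝ := (1/2) * Real.logb 2 (1 + x)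

/-- The two-user TDMA secrecy sum-rate, as a function of the time-sharing
parameters; at `α = 0` the term `α * g(⋯)` equals `0`, its limiting value. -/
noncomputable def tdmaSum (h P₁ P₂ α₁ α₂ : ℝ) : ℝ :=
  α₁ * g ((1 - h) * P₁ / (α₁ + h * P₁)) + α₂ * g ((1 - h) * P₂ / (α₂ + h * P₂))

/-- Tangent-line bound for the concave function `α ↦ α(α+P)/(α+hP)` at `α = P/S`. -/
lemma tangent_bound (h P S α : ℝ) (hh0 : 0 < h) (hh1 : h < 1) (hP : 0 < P)
    (hPS : P ≤ S) (hα : 0 ≤ α) :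
    α * ((α + P) / (α + h * P)) ≤
      (P / S) * ((P / S + P) / (P / S + h * P))
        + (1 + (1 - h) * h * S ^ 2 / (1 + h * S) ^ 2) * (α - P / S) := by
  have hS : 0 < S := lt_of_lt_of_le hP hPS
  have hd1 : 0 < α + h * P := by positivity
  have hd2 : 0 < P / S + h * P := by positivity
  have hd3 : 0 < 1 + h * S := by positivity
  rw [← sub_nonneg]
  have key : (P / S) * ((P / S + P) / (P / S + h * P))
        + (1 + (1 - h) * h * S ^ 2 / (1 + h * S) ^ 2) * (α - P / S)
        - α * ((α + P) / (α + h * P))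
      = (1 - h) * h * (S * α - P) ^ 2 / ((α + h * P) * (1 + h * S) ^ 2) := by
    field_simp
    ring
  rw [key]
  have : 0 ≤ (1 - h) := by linarith
  positivity

/-- over the simplex `{α₁,α₂ ≥ 0, α₁+α₂=1}` the TDMA secrecy sum-rate is
maximized at `αₖ = Pₖ/(P₁+P₂)`, with maximum value `g((1−h)(P₁+P₂)/(1+h(P₁+P₂)))`. -/
theorem stmt_3 (h P₁ P₂ : ℝ) (hh0 : 0 < h) (hh1 : h < 1) (hP₁ : 0 < P₁) (hP₂ : 0 < P₂) :
    (∀ α₁ α₂ : ℝ, 0 ≤ α₁ → 0 ≤ α₂ → α₁ + α₂ = 1 →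
      tdmaSum h P₁ P₂ α₁ α₂ ≤ tdmaSum h P₁ P₂ (P₁ / (P₁ + P₂)) (P₂ / (P₁ + P₂))) ∧
    tdmaSum h P₁ P₂ (P₁ / (P₁ + P₂)) (P₂ / (P₁ + P₂))
      = g ((1 - h) * (P₁ + P₂) / (1 + h * (P₁ + P₂))) := by
  have hS : 0 < P₁ + P₂ := by linarith
  have hd3 : 0 < 1 + h * (P₁ + P₂) := by positivity
  -- arguments at the optimal point
  have e1 : (1 - h) * P₁ / (P₁ / (P₁ + P₂) + h * P₁)
      = (1 - h) * (P₁ + P₂) / (1 + h * (P₁ + P₂)) := by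
    rw [div_eq_div_iff (by positivity) (by positivity)]
    field_simp
  have e2 : (1 - h) * P₂ / (P₂ / (P₁ + P₂) + h * P₂)
      = (1 - h) * (P₁ + P₂) / (1 + h * (P₁ + P₂)) := by
    rw [div_eq_div_iff (by positivity) (by positivity)]
    field_simp
  have heq : tdmaSum h P₁ P₂ (P₁ / (P₁ + P₂)) (P₂ / (P₁ + P₂))
      = g ((1 - h) * (P₁ + P₂) / (1 + h * (P₁ + P₂))) := by
    rw [tdmaSum, e1, e2, ← add_mul]
    rw [← add_div, div_self (ne_of_gt hS), one_mul]
  refine ⟨?_, heq⟩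
  intro α₁ α₂ hα₁ hα₂ hsum
  rw [heq]
  have hd1 : 0 < α₁ + h * P₁ := by positivity
  have hd2 : 0 < α₂ + h * P₂ := by positivity
  set x₁ : ℝ := (α₁ + P₁) / (α₁ + h * P₁) with hx₁def
  set x₂ : ℝ := (α₂ + P₂) / (α₂ + h * P₂) with hx₂def
  have hx₁ : (1 : ℝ) ≤ x₁ := by
    rw [hx₁def, le_div_iff₀ hd1]; nlinarith
  have hx₂ : (1 : ℝ) ≤ x₂ := by
    rw [hx₂def, le_div_iff₀ hd2]; nlinarith
  have hx₁0 : (0 : ℝ) < x₁ := by linarith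
  have hx₂0 : (0 : ℝ) < x₂ := by linarith
  have a1 : (1 : ℝ) + (1 - h) * P₁ / (α₁ + h * P₁) = x₁ := by
    rw [hx₁def]; field_simp; ring
  have a2 : (1 : ℝ) + (1 - h) * P₂ / (α₂ + h * P₂) = x₂ := by
    rw [hx₂def]; field_simp; ring
  -- the target argument
  have aT : (1 : ℝ) + (1 - h) * (P₁ + P₂) / (1 + h * (P₁ + P₂))
      = (1 + (P₁ + P₂)) / (1 + h * (P₁ + P₂)) := by
    field_simp; ring
  -- Jensen step
  have jensen : α₁ * Real.log x₁ + α₂ * Real.log x₂ ≤ Real.log (α₁ * x₁ + α₂ * x₂) := by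
    have := strictConcaveOn_log_Ioi.concaveOn.2 (Set.mem_Ioi.mpr hx₁0)
      (Set.mem_Ioi.mpr hx₂0) hα₁ hα₂ hsum
    simpa [smul_eq_mul] using this
  -- tangent bounds
  have t1 := tangent_bound h P₁ (P₁ + P₂) α₁ hh0 hh1 hP₁ (by linarith) hα₁
  have t2 := tangent_bound h P₂ (P₁ + P₂) α₂ hh0 hh1 hP₂ (by linarith) hα₂
  have esum : (P₁ / (P₁ + P₂)) * ((P₁ / (P₁ + P₂) + P₁) / (P₁ / (P₁ + P₂) + h * P₁))
      + (P₂ / (P₁ + P₂)) * ((P₂ / (P₁ + P₂) + P₂) / (P₂ / (P₁ + P₂) + h * P₂))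
      = (1 + (P₁ + P₂)) / (1 + h * (P₁ + P₂)) := by
    have n1 : (P₁ / (P₁ + P₂) + h * P₁ : ℝ) ≠ 0 := by positivity
    have n2 : (P₂ / (P₁ + P₂) + h * P₂ : ℝ) ≠ 0 := by positivity
    field_simp
  have hslack : (1 + (1 - h) * h * (P₁ + P₂) ^ 2 / (1 + h * (P₁ + P₂)) ^ 2)
      * (α₁ - P₁ / (P₁ + P₂))
      + (1 + (1 - h) * h * (P₁ + P₂) ^ 2 / (1 + h * (P₁ + P₂)) ^ 2)
      * (α₂ - P₂ / (P₁ + P₂)) = 0 := by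
    rw [← mul_add]
    have : α₁ - P₁ / (P₁ + P₂) + (α₂ - P₂ / (P₁ + P₂)) = 0 := by
      field_simp
      linear_combination (P₁ + P₂) * hsum
    rw [this, mul_zero]
  have hsumx : α₁ * x₁ + α₂ * x₂ ≤ (1 + (P₁ + P₂)) / (1 + h * (P₁ + P₂)) := by
    rw [← esum]; linarith
  have hpos : (0 : ℝ) < α₁ * x₁ + α₂ * x₂ := by nlinarith
  have mono : Real.log (α₁ * x₁ + α₂ * x₂)
      ≤ Real.log ((1 + (P₁ + P₂)) / (1 + h * (P₁ + P₂))) :=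
    Real.log_le_log hpos hsumx
  have hlog2 : (0 : ℝ) < Real.log 2 := Real.log_pos (by norm_num)
  have final : α₁ * Real.log x₁ + α₂ * Real.log x₂
      ≤ Real.log ((1 + (P₁ + P₂)) / (1 + h * (P₁ + P₂))) := le_trans jensen mono
  have hinv : (0 : ℝ) ≤ (Real.log 2)⁻¹ := by positivity
  have final2 : α₁ * Real.logb 2 x₁ + α₂ * Real.logb 2 x₂
      ≤ Real.logb 2 ((1 + (P₁ + P₂)) / (1 + h * (P₁ + P₂))) := by
    rw [Real.logb, Real.logb, Real.logb, div_eq_mul_inv, div_eq_mul_inv, div_eq_mul_inv]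
    calc α₁ * (Real.log x₁ * (Real.log 2)⁻¹) + α₂ * (Real.log x₂ * (Real.log 2)⁻¹)
        = (α₁ * Real.log x₁ + α₂ * Real.log x₂) * (Real.log 2)⁻¹ := by ring
      _ ≤ Real.log ((1 + (P₁ + P₂)) / (1 + h * (P₁ + P₂))) * (Real.log 2)⁻¹ :=
          mul_le_mul_of_nonneg_right final hinv
  rw [tdmaSum, g, g, g, a1, a2, aT]
  calc α₁ * (1 / 2 * Real.logb 2 x₁) + α₂ * (1 / 2 * Real.logb 2 x₂)
      = (1 / 2) * (α₁ * Real.logb 2 x₁ + α₂ * Real.logb 2 x₂) := by ring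
    _ ≤ (1 / 2) * Real.logb 2 ((1 + (P₁ + P₂)) / (1 + h * (P₁ + P₂))) := by linarith
end

section
/- Let 0 < h₁ ≤ h₂ and P̄₁, P̄₂ > 0. The minimizer of ρ(P₁,P₂) = (1 + h₁P₁ + h₂P₂)/(1 + P₁ + P₂) over [0,P̄₁]×[0,P̄₂] is: (P̄₁, P̄₂) if h₁ < 1 and h₂ < (1 + h₁P̄₁)/(1 + P̄₁); (P̄₁, 0) if h₁ < 1 and h₂ ≥ (1 + h₁P̄₁)/(1 + P̄₁); and (0,0) (with value ρ = 1, i.e., zero secrecy sum-rate) if h₁ ≥ 1. -/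
/-- `ρ(P₁,P₂)` as a function on `ℝ × ℝ`. -/
noncomputable def rho (h₁ h₂ : ℝ) (p : ℝ × ℝ) : ℝ :=
  (1 + h₁ * p.1 + h₂ * p.2) / (1 + p.1 + p.2)

/-- the minimizer of `ρ` over the power box `[0,P̄₁]×[0,P̄₂]` (with
`0 < h₁ ≤ h₂`) is `(P̄₁,P̄₂)` if `h₁ < 1` and `h₂ < (1+h₁P̄₁)/(1+P̄₁)`; `(P̄₁,0)` if
`h₁ < 1` and `h₂ ≥ (1+h₁P̄₁)/(1+P̄₁)`; and `(0,0)`, with value `ρ = 1` (i.e. zero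
secrecy sum-rate), if `h₁ ≥ 1`. -/
theorem stmt_8 (h₁ h₂ Pb₁ Pb₂ : ℝ) (hh₁ : 0 < h₁) (hle : h₁ ≤ h₂)
    (hPb₁ : 0 < Pb₁) (hPb₂ : 0 < Pb₂) :
    (h₁ < 1 → h₂ < (1 + h₁ * Pb₁) / (1 + Pb₁) →
      IsMinOn (rho h₁ h₂) (Set.Icc 0 Pb₁ ×ˢ Set.Icc 0 Pb₂) (Pb₁, Pb₂)) ∧
    (h₁ < 1 → (1 + h₁ * Pb₁) / (1 + Pb₁) ≤ h₂ →
      IsMinOn (rho h₁ h₂) (Set.Icc 0 Pb₁ ×ˢ Set.Icc 0 Pb₂) (Pb₁, 0)) ∧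
    (1 ≤ h₁ →
      IsMinOn (rho h₁ h₂) (Set.Icc 0 Pb₁ ×ˢ Set.Icc 0 Pb₂) (0, 0) ∧
      rho h₁ h₂ (0, 0) = 1) := by

  refine ⟨?_, ?_, ?_⟩
  · intro h1lt hlt
    rw [isMinOn_iff]
    rintro ⟨x, y⟩ ⟨⟨hx0, hx1⟩, hy0, hy1⟩
    have hBx : (0:ℝ) < 1 + x + y := by linarith
    have hB1 : (0:ℝ) < 1 + Pb₁ + y := by linarith
    have hB2 : (0:ℝ) < 1 + Pb₁ + Pb₂ := by linarith
    have hA : h₂ * (1 + Pb₁) < 1 + h₁ * Pb₁ := by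
      rwa [lt_div_iff₀ (by linarith : (0:ℝ) < 1 + Pb₁)] at hlt
    have step1 : rho h₁ h₂ (Pb₁, y) ≤ rho h₁ h₂ (x, y) := by
      simp only [rho]
      rw [div_le_div_iff₀ hB1 hBx]
      nlinarith [mul_nonneg (sub_nonneg.2 hx1)
        (by nlinarith [mul_nonneg (sub_nonneg.2 hle) hy0] : (0:ℝ) ≤ 1 - h₁ + (h₂ - h₁) * y)]
    have step2 : rho h₁ h₂ (Pb₁, Pb₂) ≤ rho h₁ h₂ (Pb₁, y) := by
      simp only [rho]
      rw [div_le_div_iff₀ hB2 hB1]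
      nlinarith [mul_nonneg (sub_nonneg.2 hy1)
        (by nlinarith : (0:ℝ) ≤ (1 + h₁ * Pb₁) - h₂ * (1 + Pb₁))]
    exact step2.trans step1
  · intro h1lt hge
    rw [isMinOn_iff]
    rintro ⟨x, y⟩ ⟨⟨hx0, hx1⟩, hy0, hy1⟩
    have hBx : (0:ℝ) < 1 + x + y := by linarith
    have hB1 : (0:ℝ) < 1 + Pb₁ + 0 := by linarith
    have hA : 1 + h₁ * Pb₁ ≤ h₂ * (1 + Pb₁) := by
      rwa [div_le_iff₀ (by linarith : (0:ℝ) < 1 + Pb₁)] at hge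
    simp only [rho]
    rw [div_le_div_iff₀ hB1 hBx]
    nlinarith [mul_nonneg (sub_nonneg.2 hx1)
        (by nlinarith [mul_nonneg (sub_nonneg.2 hle) hy0] : (0:ℝ) ≤ 1 - h₁ + (h₂ - h₁) * y),
      mul_nonneg hy0 (by nlinarith : (0:ℝ) ≤ h₂ * (1 + Pb₁) - (1 + h₁ * Pb₁))]
  · intro h1ge
    have h2ge : 1 ≤ h₂ := le_trans h1ge hle
    constructor
    · rw [isMinOn_iff]
      rintro ⟨x, y⟩ ⟨⟨hx0, hx1⟩, hy0, hy1⟩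
      have hBx : (0:ℝ) < 1 + x + y := by linarith
      simp only [rho]
      rw [div_le_div_iff₀ (by norm_num : (0:ℝ) < 1 + 0 + 0) hBx]
      nlinarith [mul_nonneg hx0 (sub_nonneg.2 h1ge), mul_nonneg hy0 (sub_nonneg.2 h2ge)]
    · simp [rho]
end

section
/- Let h₂ > h₁ ≥ 1 and P̄₂ > (h₁−1)/(h₂−h₁). Then for any P₁ > 0 there exists P₂ ∈ (0, P̄₂] such that g(P₁/(1+P₂)) − g(h₁P₁/(1+h₂P₂)) > 0, where g(x) = (1/2)·log₂(1+x). That is, cooperative jamming by user 2 enables user 1, whose secrecy capacity is zero without jamming (since h₁ ≥ 1), to achieve a strictly positive secrecy rate. -/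
/-- for `h₂ > h₁ ≥ 1` and jamming-power budget `P̄₂ > (h₁−1)/(h₂−h₁)`,
cooperative jamming gives user 1 a strictly positive secrecy rate: for any `P₁ > 0`
there is `P₂ ∈ (0,P̄₂]` with `g(P₁/(1+P₂)) − g(h₁P₁/(1+h₂P₂)) > 0`. -/
theorem stmt_11 (h₁ h₂ Pb₂ : ℝ) (hh₁ : 1 ≤ h₁) (hlt : h₁ < h₂)
    (hPb₂ : (h₁ - 1) / (h₂ - h₁) < Pb₂) :
    ∀ P₁ : ℝ, 0 < P₁ → ∃ P₂ : ℝ, 0 < P₂ ∧ P₂ ≤ Pb₂ ∧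
      0 < g (P₁ / (1 + P₂)) - g (h₁ * P₁ / (1 + h₂ * P₂)) := by
  intro P₁ hP₁
  have hden : (0:ℝ) < h₂ - h₁ := by linarith
  have hnum : (0:ℝ) ≤ h₁ - 1 := by linarith
  have hPb₂pos : 0 < Pb₂ := lt_of_le_of_lt (div_nonneg hnum hden.le) hPb₂
  refine ⟨Pb₂, hPb₂pos, le_refl _, ?_⟩
  have h₂pos : (0:ℝ) < h₂ := by linarith
  have h1 : (0:ℝ) < 1 + Pb₂ := by linarith
  have h2 : (0:ℝ) < 1 + h₂ * Pb₂ := by positivity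
  -- key inequality: h₁ P₁ / (1 + h₂ Pb₂) < P₁ / (1 + Pb₂)
  have hkey : h₁ * P₁ / (1 + h₂ * Pb₂) < P₁ / (1 + Pb₂) := by
    rw [div_lt_div_iff₀ h2 h1]
    have : h₁ - 1 < (h₂ - h₁) * Pb₂ := by
      have := (div_lt_iff₀ hden).mp hPb₂
      linarith [this]
    nlinarith
  have hx : (0:ℝ) ≤ h₁ * P₁ / (1 + h₂ * Pb₂) := by positivity
  have hg : g (h₁ * P₁ / (1 + h₂ * Pb₂)) < g (P₁ / (1 + Pb₂)) := by
    unfold g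
    have := Real.logb_lt_logb (b := 2) one_lt_two
      (show (0:ℝ) < 1 + h₁ * P₁ / (1 + h₂ * Pb₂) by linarith)
      (show 1 + h₁ * P₁ / (1 + h₂ * Pb₂) < 1 + P₁ / (1 + Pb₂) by linarith)
    linarith
  linarith
end

section
/- Fix h₂ > h₁ > 0 with h₂ ≠ h₁, and P₁ > 0. Define f(P₂) = ρ(P₁,P₂)/φ₂(P₂) with ρ(P₁,P₂) = (1+h₁P₁+h₂P₂)/(1+P₁+P₂) and φ₂(P) = (1+h₂P)/(1+P). Then the derivative of f with respect to P₂ has the same sign as ψ(P₂) = P₁·h₂·(h₂−h₁)·(P₂−p)(P₂−p̄), where p = (−h₂(1−h₁) + √D)/(h₂(h₂−h₁)), p̄ = (−h₂(1−h₁) − √D)/(h₂(h₂−h₁)), and D = h₁h₂(h₂−1)[(h₂−1)+(h₂−h₁)P₁], provided D ≥ 0. -/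
/-!
Two quotient rules give `f' = N / ((1+P₁+x)² (1+h₂x)²)` with `N` a quadratic in `x` of leading
coefficient `P₁h₂(h₂-h₁)`; completing the square writes `N = P₁((h₂(h₂-h₁)x + h₂(1-h₁))² - D) /
(h₂(h₂-h₁))`, whose roots are `p` and `p̄`. The denominator is positive for `P₂ ≥ 0`.
-/

theorem Real.sign_div_of_pos (a : ℝ) {c : ℝ} (hc : 0 < c) : Real.sign (a / c) = Real.sign a := by
  rcases lt_trichotomy a 0 with ha | rfl | ha
  · rw [Real.sign_of_neg ha, Real.sign_of_neg (div_neg_of_neg_of_pos ha hc)]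
  · simp
  · rw [Real.sign_of_pos ha, Real.sign_of_pos (div_pos ha hc)]

theorem sub_mul_sub_roots_eq {K : Type*} [Field K] {a b s D : K} (ha : a ≠ 0) (hs : s ^ 2 = D)
    (x : K) :
    (x - (-b + s) / a) * (x - (-b - s) / a) = ((a * x + b) ^ 2 - D) / a ^ 2 := by
  field_simp
  linear_combination (-1 : K) * hs

theorem hasDerivAt_affine_div_add {a b c x : ℝ} (hx : c + x ≠ 0) :
    HasDerivAt (fun y => (a + b * y) / (c + y)) ((b * c - a) / (c + x) ^ 2) x := by
  have hnum : HasDerivAt (fun y => a + b * y) b x := by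
    simpa using ((hasDerivAt_id x).const_mul b).const_add a
  exact (hnum.fun_div ((hasDerivAt_id' x).const_add c) hx).congr_deriv (by ring)

theorem hasDerivAt_jammingRatio {h₁ h₂ P₁ x : ℝ} (hx₁ : 1 + P₁ + x ≠ 0) (hx₂ : 1 + h₂ * x ≠ 0)
    (hx : 1 + x ≠ 0) :
    HasDerivAt (fun y => ((1 + h₁ * P₁ + h₂ * y) / (1 + P₁ + y)) / ((1 + h₂ * y) / (1 + y)))
      (((h₂ - 1 + (h₂ - h₁) * P₁) * (1 + h₂ * x) * (1 + x)
          - (h₂ - 1) * (1 + h₁ * P₁ + h₂ * x) * (1 + P₁ + x))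
        / ((1 + P₁ + x) ^ 2 * (1 + h₂ * x) ^ 2)) x := by
  have hρ := hasDerivAt_affine_div_add (a := 1 + h₁ * P₁) (b := h₂) hx₁
  have hφ := hasDerivAt_affine_div_add (a := 1) (b := h₂) hx
  refine (hρ.fun_div hφ (div_ne_zero hx₂ hx)).congr_deriv ?_
  field_simp
  ring

/-- the derivative of `f(P₂) = ρ(P₁,P₂)/φ₂(P₂)` with respect to `P₂` has
the same sign as `ψ(P₂) = P₁h₂(h₂−h₁)(P₂−p)(P₂−p̄)`, where `p, p̄` are as displayed and
`D = h₁h₂(h₂−1)[(h₂−1)+(h₂−h₁)P₁] ≥ 0`; in fact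
`f'(P₂) = ψ(P₂)/((1+P₁+P₂)²(1+h₂P₂)²)`. -/
theorem stmt_13 (h₁ h₂ P₁ P₂ : ℝ) (hh₁ : 0 < h₁) (hlt : h₁ < h₂) (hP₁ : 0 < P₁)
    (hP₂ : 0 ≤ P₂)
    (D : ℝ) (hD : D = h₁ * h₂ * (h₂ - 1) * ((h₂ - 1) + (h₂ - h₁) * P₁)) (hDpos : 0 ≤ D)
    (p pbar : ℝ)
    (hp : p = (-(h₂ * (1 - h₁)) + Real.sqrt D) / (h₂ * (h₂ - h₁)))
    (hpbar : pbar = (-(h₂ * (1 - h₁)) - Real.sqrt D) / (h₂ * (h₂ - h₁))) :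
    HasDerivAt
      (fun x : ℝ => ((1 + h₁ * P₁ + h₂ * x) / (1 + P₁ + x)) / ((1 + h₂ * x) / (1 + x)))
      (P₁ * h₂ * (h₂ - h₁) * (P₂ - p) * (P₂ - pbar)
        / ((1 + P₁ + P₂) ^ 2 * (1 + h₂ * P₂) ^ 2)) P₂ ∧
    Real.sign
      (deriv (fun x : ℝ =>
        ((1 + h₁ * P₁ + h₂ * x) / (1 + P₁ + x)) / ((1 + h₂ * x) / (1 + x))) P₂)
      = Real.sign (P₁ * h₂ * (h₂ - h₁) * (P₂ - p) * (P₂ - pbar)) := by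
  have hh₂ : 0 < h₂ := hh₁.trans hlt
  have hP₁P₂ : 0 < 1 + P₁ + P₂ := by linarith
  have hh₂P₂ : 0 < 1 + h₂ * P₂ := by positivity
  have hf := hasDerivAt_jammingRatio (h₁ := h₁) hP₁P₂.ne' hh₂P₂.ne' (by positivity : 1 + P₂ ≠ 0)
  have hroots : (P₂ - p) * (P₂ - pbar)
      = ((h₂ * (h₂ - h₁) * P₂ + h₂ * (1 - h₁)) ^ 2 - D) / (h₂ * (h₂ - h₁)) ^ 2 := by
    rw [hp, hpbar]
    exact sub_mul_sub_roots_eq (mul_pos hh₂ (sub_pos.mpr hlt)).ne' (Real.sq_sqrt hDpos) P₂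
  have hnum : (h₂ - 1 + (h₂ - h₁) * P₁) * (1 + h₂ * P₂) * (1 + P₂)
        - (h₂ - 1) * (1 + h₁ * P₁ + h₂ * P₂) * (1 + P₁ + P₂)
      = P₁ * h₂ * (h₂ - h₁) * (P₂ - p) * (P₂ - pbar) := by
    rw [mul_assoc _ (P₂ - p), hroots, hD]
    field_simp [(sub_pos.mpr hlt).ne']
    ring
  rw [hnum] at hf
  exact ⟨hf, by rw [hf.deriv, Real.sign_div_of_pos _ (by positivity)]⟩
end

section
/- Let 0 < h < 1 and fix P ≥ 0. The function ξ ↦ ξ − φ(ξ), where φ(ξ) = (1/2)·log₂[2πe(1−h) + h·2^{2ξ}], is nondecreasing in ξ, and φ is nondecreasing in ξ. Consequently, if ξ ≤ (1/2)·log₂(2πe(1+P)), then ξ − φ(ξ) ≤ (1/2)·log₂(1+P) − (1/2)·log₂(1+hP). -/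
open Real

/-- with `φ(ξ) = (1/2)·log₂[2πe(1−h) + h·2^(2ξ)]` for `0 < h < 1`,
both `φ` and `ξ ↦ ξ − φ(ξ)` are nondecreasing; consequently, for any
`ξ ≤ (1/2)·log₂(2πe(1+P))` with `P ≥ 0`,
`ξ − φ(ξ) ≤ (1/2)·log₂(1+P) − (1/2)·log₂(1+hP)`. -/
theorem stmt_17 (h P : ℝ) (hh0 : 0 < h) (hh1 : h < 1) (hP : 0 ≤ P) :
    Monotone (fun ξ : ℝ =>
      (1/2) * logb 2 (2 * π * exp 1 * (1 - h) + h * (2 : ℝ) ^ (2 * ξ))) ∧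
    Monotone (fun ξ : ℝ =>
      ξ - (1/2) * logb 2 (2 * π * exp 1 * (1 - h) + h * (2 : ℝ) ^ (2 * ξ))) ∧
    (∀ ξ : ℝ, ξ ≤ (1/2) * logb 2 (2 * π * exp 1 * (1 + P)) →
      ξ - (1/2) * logb 2 (2 * π * exp 1 * (1 - h) + h * (2 : ℝ) ^ (2 * ξ))
        ≤ (1/2) * logb 2 (1 + P) - (1/2) * logb 2 (1 + h * P)) := by
  have h1 : (0:ℝ) < 1 - h := by linarith
  have hπ : (0:ℝ) < π := Real.pi_pos
  have hc : (0:ℝ) < 2 * π * exp 1 * (1 - h) := by positivity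
  have hD : ∀ ξ : ℝ, 0 < 2 * π * exp 1 * (1 - h) + h * (2 : ℝ) ^ (2 * ξ) := by
    intro ξ
    have : (0:ℝ) < (2:ℝ) ^ (2 * ξ) := rpow_pos_of_pos two_pos _
    positivity
  have hb2 : (1:ℝ) < 2 := one_lt_two
  -- monotonicity of the second function
  have mono2 : Monotone (fun ξ : ℝ =>
      ξ - (1/2) * logb 2 (2 * π * exp 1 * (1 - h) + h * (2 : ℝ) ^ (2 * ξ))) := by
    intro a b hab
    simp only
    rw [sub_le_sub_iff]
    have key : 2 * π * exp 1 * (1 - h) + h * (2 : ℝ) ^ (2 * b)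
        ≤ (2:ℝ) ^ (2 * (b - a)) * (2 * π * exp 1 * (1 - h) + h * (2 : ℝ) ^ (2 * a)) := by
      have h2 : (1:ℝ) ≤ (2:ℝ) ^ (2 * (b - a)) :=
        Real.one_le_rpow (by norm_num) (by linarith)
      have h3 : (2:ℝ) ^ (2 * (b - a)) * (2:ℝ) ^ (2 * a) = (2:ℝ) ^ (2 * b) := by
        rw [← Real.rpow_add two_pos]; ring_nf
      nlinarith [hc, rpow_pos_of_pos (show (0:ℝ) < 2 by norm_num) (2*a)]
    have := (Real.logb_le_logb hb2 (hD b) (by positivity)).mpr key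
    rw [Real.logb_mul (by positivity) (ne_of_gt (hD a)), Real.logb_rpow two_pos (by norm_num)] at this
    linarith
  refine ⟨?_, mono2, ?_⟩
  · intro a b hab
    simp only
    have hDa := hD a; have hDb := hD b
    have : (2:ℝ) ^ (2 * a) ≤ (2:ℝ) ^ (2 * b) :=
      Real.rpow_le_rpow_of_exponent_le (by norm_num) (by linarith)
    have hle : 2 * π * exp 1 * (1 - h) + h * (2 : ℝ) ^ (2 * a)
        ≤ 2 * π * exp 1 * (1 - h) + h * (2 : ℝ) ^ (2 * b) := by nlinarith
    have := Real.logb_le_logb_of_le hb2 hDa hle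
    linarith
  · intro ξ hξ
    set ξs := (1/2) * logb 2 (2 * π * exp 1 * (1 + P)) with hξs
    have h1P : (0:ℝ) < 1 + P := by linarith
    have h1hP : (0:ℝ) < 1 + h * P := by nlinarith
    have hval : (2:ℝ) ^ (2 * ξs) = 2 * π * exp 1 * (1 + P) := by
      rw [hξs]
      have : 2 * ((1:ℝ)/2 * logb 2 (2 * π * exp 1 * (1 + P)))
          = logb 2 (2 * π * exp 1 * (1 + P)) := by ring
      rw [this, Real.rpow_logb two_pos (by norm_num) (by positivity)]
    have hcalc : ξs - (1/2) * logb 2 (2 * π * exp 1 * (1 - h) + h * (2 : ℝ) ^ (2 * ξs))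
        = (1/2) * logb 2 (1 + P) - (1/2) * logb 2 (1 + h * P) := by
      rw [hval]
      have hD' : 2 * π * exp 1 * (1 - h) + h * (2 * π * exp 1 * (1 + P))
          = (2 * π * exp 1) * (1 + h * P) := by ring
      rw [hD', hξs,
        Real.logb_mul (by positivity) (ne_of_gt h1hP),
        Real.logb_mul (by positivity) (ne_of_gt h1P)]
      ring
    calc ξ - (1/2) * logb 2 (2 * π * exp 1 * (1 - h) + h * (2 : ℝ) ^ (2 * ξ))
        ≤ ξs - (1/2) * logb 2 (2 * π * exp 1 * (1 - h) + h * (2 : ℝ) ^ (2 * ξs)) :=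
          mono2 hξ
      _ = _ := hcalc
end

section
/- Let h₁, h₂ > 0, P̄₁, P̄₂ > 0, and suppose (P₁*, P₂*) minimizes ρ(P₁,P₂) = (1+h₁P₁+h₂P₂)/(1+P₁+P₂) over [0,P̄₁]×[0,P̄₂]. Then for each j ∈ {1,2}: if hⱼ < ρ(P₁*,P₂*) then Pⱼ* = P̄ⱼ, and if hⱼ > ρ(P₁*,P₂*) then Pⱼ* = 0. -/
lemma rho_diff_fst (h₁ h₂ x x' y : ℝ) (hD : 1 + x + y ≠ 0) (hD' : 1 + x' + y ≠ 0) :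
    rho h₁ h₂ (x', y) - rho h₁ h₂ (x, y)
      = (x' - x) * (h₁ - rho h₁ h₂ (x, y)) / (1 + x' + y) := by
  unfold rho
  field_simp
  ring

lemma rho_diff_snd (h₁ h₂ x y y' : ℝ) (hD : 1 + x + y ≠ 0) (hD' : 1 + x + y' ≠ 0) :
    rho h₁ h₂ (x, y') - rho h₁ h₂ (x, y)
      = (y' - y) * (h₂ - rho h₁ h₂ (x, y)) / (1 + x + y') := by
  unfold rho
  field_simp
  ring

/-- KKT-type characterization.  If `(P₁*,P₂*)` minimizes `ρ` over the
power box, then for each coordinate `j`: `hⱼ < ρ(P*) → Pⱼ* = P̄ⱼ` and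
`hⱼ > ρ(P*) → Pⱼ* = 0`. -/
theorem stmt_19 (h₁ h₂ Pb₁ Pb₂ : ℝ) (hh₁ : 0 < h₁) (hh₂ : 0 < h₂)
    (hPb₁ : 0 < Pb₁) (hPb₂ : 0 < Pb₂) (Pstar : ℝ × ℝ)
    (hmem : Pstar ∈ Set.Icc 0 Pb₁ ×ˢ Set.Icc 0 Pb₂)
    (hmin : IsMinOn (rho h₁ h₂) (Set.Icc 0 Pb₁ ×ˢ Set.Icc 0 Pb₂) Pstar) :
    ((h₁ < rho h₁ h₂ Pstar → Pstar.1 = Pb₁) ∧ (rho h₁ h₂ Pstar < h₁ → Pstar.1 = 0)) ∧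
    ((h₂ < rho h₁ h₂ Pstar → Pstar.2 = Pb₂) ∧ (rho h₁ h₂ Pstar < h₂ → Pstar.2 = 0)) := by
  obtain ⟨⟨h10, h1b⟩, ⟨h20, h2b⟩⟩ := hmem
  have hPeq : Pstar = (Pstar.1, Pstar.2) := rfl
  have hD : (1 : ℝ) + Pstar.1 + Pstar.2 ≠ 0 := by positivity
  refine ⟨⟨?_, ?_⟩, ⟨?_, ?_⟩⟩
  · intro hlt
    by_contra hne
    have hlt' : Pstar.1 < Pb₁ := lt_of_le_of_ne h1b hne
    have hq : ((Pb₁, Pstar.2) : ℝ × ℝ) ∈ Set.Icc 0 Pb₁ ×ˢ Set.Icc 0 Pb₂ :=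
      ⟨⟨hPb₁.le, le_rfl⟩, ⟨h20, h2b⟩⟩
    have hmin' : rho h₁ h₂ Pstar ≤ rho h₁ h₂ _ := hmin hq
    have hD' : (1 : ℝ) + Pb₁ + Pstar.2 ≠ 0 := by positivity
    have hdiff := rho_diff_fst h₁ h₂ Pstar.1 Pb₁ Pstar.2 hD hD'
    rw [← hPeq] at hdiff
    have hneg : (Pb₁ - Pstar.1) * (h₁ - rho h₁ h₂ Pstar) / (1 + Pb₁ + Pstar.2) < 0 := by
      apply div_neg_of_neg_of_pos
      · exact mul_neg_of_pos_of_neg (by linarith) (by linarith)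
      · positivity
    simp only [isMinOn_iff] at hmin
    linarith
  · intro hlt
    by_contra hne
    have hlt' : 0 < Pstar.1 := lt_of_le_of_ne h10 (Ne.symm hne)
    have hq : ((0, Pstar.2) : ℝ × ℝ) ∈ Set.Icc 0 Pb₁ ×ˢ Set.Icc 0 Pb₂ :=
      ⟨⟨le_rfl, hPb₁.le⟩, ⟨h20, h2b⟩⟩
    have hmin' : rho h₁ h₂ Pstar ≤ rho h₁ h₂ _ := hmin hq
    have hD' : (1 : ℝ) + 0 + Pstar.2 ≠ 0 := by positivity
    have hdiff := rho_diff_fst h₁ h₂ Pstar.1 0 Pstar.2 hD hD'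
    rw [← hPeq] at hdiff
    have hneg : ((0 : ℝ) - Pstar.1) * (h₁ - rho h₁ h₂ Pstar) / (1 + 0 + Pstar.2) < 0 := by
      apply div_neg_of_neg_of_pos
      · exact mul_neg_of_neg_of_pos (by linarith) (by linarith)
      · positivity
    linarith
  · intro hlt
    by_contra hne
    have hlt' : Pstar.2 < Pb₂ := lt_of_le_of_ne h2b hne
    have hq : ((Pstar.1, Pb₂) : ℝ × ℝ) ∈ Set.Icc 0 Pb₁ ×ˢ Set.Icc 0 Pb₂ :=
      ⟨⟨h10, h1b⟩, ⟨hPb₂.le, le_rfl⟩⟩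
    have hmin' : rho h₁ h₂ Pstar ≤ rho h₁ h₂ _ := hmin hq
    have hD' : (1 : ℝ) + Pstar.1 + Pb₂ ≠ 0 := by positivity
    have hdiff := rho_diff_snd h₁ h₂ Pstar.1 Pstar.2 Pb₂ hD hD'
    rw [← hPeq] at hdiff
    have hneg : (Pb₂ - Pstar.2) * (h₂ - rho h₁ h₂ Pstar) / (1 + Pstar.1 + Pb₂) < 0 := by
      apply div_neg_of_neg_of_pos
      · exact mul_neg_of_pos_of_neg (by linarith) (by linarith)
      · positivity
    linarith
  · intro hlt
    by_contra hne
    have hlt' : 0 < Pstar.2 := lt_of_le_of_ne h20 (Ne.symm hne)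
    have hq : ((Pstar.1, 0) : ℝ × ℝ) ∈ Set.Icc 0 Pb₁ ×ˢ Set.Icc 0 Pb₂ :=
      ⟨⟨h10, h1b⟩, ⟨le_rfl, hPb₂.le⟩⟩
    have hmin' : rho h₁ h₂ Pstar ≤ rho h₁ h₂ _ := hmin hq
    have hD' : (1 : ℝ) + Pstar.1 + 0 ≠ 0 := by positivity
    have hdiff := rho_diff_snd h₁ h₂ Pstar.1 Pstar.2 0 hD hD'
    rw [← hPeq] at hdiff
    have hneg : ((0 : ℝ) - Pstar.2) * (h₂ - rho h₁ h₂ Pstar) / (1 + Pstar.1 + 0) < 0 := by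
      apply div_neg_of_neg_of_pos
      · exact mul_neg_of_neg_of_pos (by linarith) (by linarith)
      · positivity
    linarith
end
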